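/- arXiv:2109.12954 — 2 statements merged into one kernel-verified Lean document; each statement's English description precedes it below -/
import Mathlib

section
/- Let C be an additive Krull–Schmidt category and f : X₁ ⊕ X₂ → Y₁ ⊕ Y₂ a morphism such that π₁ ∘ f ∘ ι₁ lies in the Jacobson radical of C, where ι₁ : X₁ → X₁ ⊕ X₂ is the canonical inclusion and π₁ : Y₁ ⊕ Y₂ → Y₁ is the canonical projection. Then every object Z admitting morphisms g : Z → X₁ ⊕ X₂ and h : Y₁ ⊕ Y₂ → Z with h ∘ f ∘ g an automorphism of Z satisfies Z ∈ add(X₂ ⊕ Y₂). -/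
open CategoryTheory CategoryTheory.Limits Opposite ZeroObject

universe v u

namespace NExangPaper

attribute [local instance] CategoryTheory.Limits.hasBinaryBiproducts_of_finite_biproducts


variable {C : Type u} [Category.{v} C] [Preadditive C]

/-- `f : X ⟶ Y` lies in the Jacobson radical `rad_C` of the preadditive category `C`:
this is the standard characterization `∀ g, 𝟙 X - g ∘ f` is invertible, which for a
Krull–Schmidt category agrees with the ideal whose value at `(A,A)` is the Jacobson
radical of `End A`. -/
def InRad {X Y : C} (f : X ⟶ Y) : Prop := ∀ g : Y ⟶ X, IsIso (𝟙 X - f ≫ g)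

/-- `C` is a Krull–Schmidt category: every object is a finite direct sum of objects with
local endomorphism rings. -/
def IsKrullSchmidt (C : Type u) [Category.{v} C] [Preadditive C] [HasFiniteBiproducts C] : Prop :=
  ∀ X : C, ∃ (k : ℕ) (Y : Fin k → C) (_ : X ≅ ⨁ Y), ∀ i, IsLocalRing (End (Y i))

/-- `Z` belongs to `add W`, i.e. `Z` is a direct summand of a finite direct sum of copies of `W`. -/
def InAdd {C : Type u} [Category.{v} C] [Preadditive C] [HasFiniteBiproducts C]
    (W Z : C) : Prop :=
  ∃ (k : ℕ) (r : Z ⟶ ⨁ fun _ : Fin k => W) (s : (⨁ fun _ : Fin k => W) ⟶ Z), r ≫ s = 𝟙 Z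

/-- An object of the category `C^{n+2}_C` of complexes concentrated in degrees `0,…,n+1`.
(The terms in degrees `> n+1` are irrelevant junk; all conditions only concern degrees
`0,…,n+1`.) -/
structure NComplex (C : Type u) [Category.{v} C] [Preadditive C] (n : ℕ) where
  X : ℕ → C
  d : ∀ i, X i ⟶ X (i + 1)
  dd : ∀ i, i + 1 ≤ n → d i ≫ d (i + 1) = 0

variable {n : ℕ}

/-- A morphism of complexes concentrated in degrees `0,…,n+1`. -/
@[ext]
structure ChainMap (X Y : NComplex C n) where
  f : ∀ i, X.X i ⟶ Y.X i
  comm : ∀ i, i ≤ n → X.d i ≫ f (i + 1) = f i ≫ Y.d i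

def ChainMap.id (X : NComplex C n) : ChainMap X X where
  f _ := 𝟙 _
  comm _ _ := by simp

def ChainMap.comp {X Y Z : NComplex C n} (φ : ChainMap X Y) (ψ : ChainMap Y Z) :
    ChainMap X Z where
  f i := φ.f i ≫ ψ.f i
  comm i hi := by rw [← Category.assoc, φ.comm i hi, Category.assoc, ψ.comm i hi,
    ← Category.assoc]

/-- A chain homotopy between two morphisms of complexes concentrated in degrees `0,…,n+1`. -/
structure Homotopy' {X Y : NComplex C n} (φ ψ : ChainMap X Y) where
  s : ∀ i, X.X (i + 1) ⟶ Y.X i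
  comm0 : φ.f 0 - ψ.f 0 = X.d 0 ≫ s 0
  comm : ∀ i, i + 1 ≤ n → φ.f (i + 1) - ψ.f (i + 1) = s i ≫ Y.d i + X.d (i + 1) ≫ s (i + 1)
  commTop : φ.f (n + 1) - ψ.f (n + 1) = s n ≫ Y.d n

/-- Homotopy equivalence of complexes concentrated in degrees `0,…,n+1`. -/
def HtpyEquiv (X Y : NComplex C n) : Prop :=
  ∃ (φ : ChainMap X Y) (ψ : ChainMap Y X),
    Nonempty (Homotopy' (φ.comp ψ) (ChainMap.id X)) ∧
    Nonempty (Homotopy' (ψ.comp φ) (ChainMap.id Y))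

/-- Homotopy equivalence with identities at the two ends (i.e. homotopy equivalence in the
category `C^{n+2}_{(A,C)}` of complexes with fixed end terms). -/
def FixedHtpyEquiv (X Y : NComplex C n) (h0 : X.X 0 = Y.X 0)
    (h1 : X.X (n + 1) = Y.X (n + 1)) : Prop :=
  ∃ (φ : ChainMap X Y) (ψ : ChainMap Y X),
    φ.f 0 = eqToHom h0 ∧ φ.f (n + 1) = eqToHom h1 ∧
    ψ.f 0 = eqToHom h0.symm ∧ ψ.f (n + 1) = eqToHom h1.symm ∧
    Nonempty (Homotopy' (φ.comp ψ) (ChainMap.id X)) ∧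
    Nonempty (Homotopy' (ψ.comp φ) (ChainMap.id Y))

/-- An isomorphism of complexes concentrated in degrees `0,…,n+1` (levelwise isomorphisms in
the relevant degrees, commuting with the differentials). -/
structure CpxIso (X Y : NComplex C n) where
  e : ∀ i, i ≤ n + 1 → (X.X i ≅ Y.X i)
  comm : ∀ i (hi : i ≤ n),
    X.d i ≫ (e (i + 1) (by omega)).hom = (e i (by omega)).hom ≫ Y.d i

/-- Degreewise direct sum of complexes. -/
noncomputable def biprodC [HasBinaryBiproducts C] (X Y : NComplex C n) : NComplex C n where
  X i := X.X i ⊞ Y.X i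
  d i := biprod.map (X.d i) (Y.d i)
  dd i hi := by
    ext <;> simp [X.dd i hi, Y.dd i hi]

/-- The complex `0 → ⋯ → 0 → Z →(𝟙) Z → 0 → ⋯ → 0` with `Z` placed in degrees `k` and
`k+1`. -/
noncomputable def splitCpx [HasZeroObject C] (Z : C) (k : ℕ) : NComplex C n where
  X j := if j = k ∨ j = k + 1 then Z else 0
  d j :=
    if h : j = k then
      eqToHom (by subst h; simp)
    else 0
  dd j hj := by
    by_cases h : j = k
    · simp [dif_neg (show ¬ j + 1 = k by omega)]
    · simp [dif_neg h]

/-- The zero complex. -/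
noncomputable def zeroCpx [HasZeroObject C] : NComplex C n where
  X _ := 0
  d _ := 0
  dd _ _ := by simp

/-- Image of a complex under an additive functor. -/
def mapCpx {D : Type u} [Category.{v} D] [Preadditive D] (F : C ⥤ D) [F.Additive]
    (X : NComplex C n) : NComplex D n where
  X i := F.obj (X.X i)
  d i := F.map (X.d i)
  dd i hi := by rw [← F.map_comp, X.dd i hi, F.map_zero]

section Exang

variable (C) (n)

/-- The underlying data of an `n`-exangulated category: an additive `Ab`-valued bifunctor `E`
and a class of distinguished `n`-exangles (a complex concentrated in degrees `0,…,n+1`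
together with an `E`-extension attached to its end terms). -/
structure NExangData where
  E : Cᵒᵖ ⥤ C ⥤ AddCommGrpCat.{v}
  Dist : ∀ X : NComplex C n, ((E.obj (op (X.X (n + 1)))).obj (X.X 0)) → Prop

variable {C n}

/-- Transport of an `E`-extension along equalities of its end objects. -/
def ETransport (E : Cᵒᵖ ⥤ C ⥤ AddCommGrpCat.{v}) {A A' B B' : C} (hA : A = A') (hB : B = B')
    (δ : (E.obj (op B)).obj A) : (E.obj (op B')).obj A' :=
  (E.map (eqToHom hB.symm).op).app A' (((E.obj (op B)).map (eqToHom hA)) δ)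

/-- `f` is an `s`-inflation: it is the `0`-th differential of some distinguished `n`-exangle. -/
def NExangData.Inflation (S : NExangData C n) {A B : C} (f : A ⟶ B) : Prop :=
  ∃ (X : NComplex C n) (δ : (S.E.obj (op (X.X (n + 1)))).obj (X.X 0))
    (h0 : X.X 0 = A) (h1 : X.X 1 = B),
      S.Dist X δ ∧ X.d 0 = eqToHom h0 ≫ f ≫ eqToHom h1.symm

/-- `f` is an `s`-deflation: it is the `n`-th differential of some distinguished `n`-exangle. -/
def NExangData.Deflation (S : NExangData C n) {A B : C} (f : A ⟶ B) : Prop :=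
  ∃ (X : NComplex C n) (δ : (S.E.obj (op (X.X (n + 1)))).obj (X.X 0))
    (h0 : X.X n = A) (h1 : X.X (n + 1) = B),
      S.Dist X δ ∧ X.d n = eqToHom h0 ≫ f ≫ eqToHom h1.symm

/-- `M` is (a choice of) the mapping cone of a morphism `f• : X• → Y•` with `f₀ = id`:
`M : X₁ → X₂ ⊕ Y₁ → ⋯ → X_{n+1} ⊕ Y_n → Y_{n+1}`, encoded via binary biproduct (bicone)
data in the middle degrees and the usual matrix differentials. -/
def IsMappingCone {X Y : NComplex C n} (φ : ChainMap X Y) (M : NComplex C n) : Prop :=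
  ∃ (h0 : M.X 0 = X.X 1) (htop : M.X (n + 1) = Y.X (n + 1))
    (p : ∀ i, 1 ≤ i → i ≤ n → (M.X i ⟶ X.X (i + 1)))
    (q : ∀ i, 1 ≤ i → i ≤ n → (M.X i ⟶ Y.X i))
    (ι₁ : ∀ i, 1 ≤ i → i ≤ n → (X.X (i + 1) ⟶ M.X i))
    (ι₂ : ∀ i, 1 ≤ i → i ≤ n → (Y.X i ⟶ M.X i)),
    (∀ i (h1 : 1 ≤ i) (h2 : i ≤ n),
      ι₁ i h1 h2 ≫ p i h1 h2 = 𝟙 _ ∧ ι₂ i h1 h2 ≫ q i h1 h2 = 𝟙 _ ∧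
      ι₁ i h1 h2 ≫ q i h1 h2 = 0 ∧ ι₂ i h1 h2 ≫ p i h1 h2 = 0 ∧
      p i h1 h2 ≫ ι₁ i h1 h2 + q i h1 h2 ≫ ι₂ i h1 h2 = 𝟙 (M.X i)) ∧
    (∀ hn : 1 ≤ n,
      M.d 0 ≫ p 1 le_rfl hn = eqToHom h0 ≫ (-(X.d 1)) ∧
      M.d 0 ≫ q 1 le_rfl hn = eqToHom h0 ≫ φ.f 1) ∧
    (∀ i (h1 : 1 ≤ i) (h2 : i + 1 ≤ n),
      M.d i = p i h1 (by omega) ≫ (-(X.d (i + 1))) ≫ ι₁ (i + 1) (by omega) h2 +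
        p i h1 (by omega) ≫ φ.f (i + 1) ≫ ι₂ (i + 1) (by omega) h2 +
        q i h1 (by omega) ≫ Y.d i ≫ ι₂ (i + 1) (by omega) h2) ∧
    (∀ hn : 1 ≤ n,
      M.d n = p n hn le_rfl ≫ φ.f (n + 1) ≫ eqToHom htop.symm +
        q n hn le_rfl ≫ Y.d n ≫ eqToHom htop.symm)

/-- `N` is (a choice of) the mapping cocone of a morphism `f• : X• → Y•` with `f_{n+1} = id`:
`N : X₀ → X₁ ⊕ Y₀ → ⋯ → X_n ⊕ Y_{n-1} → Y_n`, encoded via binary biproduct (bicone) data. -/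
def IsMappingCocone {X Y : NComplex C n} (φ : ChainMap X Y) (N : NComplex C n) : Prop :=
  ∃ (h0 : N.X 0 = X.X 0) (htop : N.X (n + 1) = Y.X n)
    (p : ∀ j, j + 1 ≤ n → (N.X (j + 1) ⟶ X.X (j + 1)))
    (q : ∀ j, j + 1 ≤ n → (N.X (j + 1) ⟶ Y.X j))
    (ι₁ : ∀ j, j + 1 ≤ n → (X.X (j + 1) ⟶ N.X (j + 1)))
    (ι₂ : ∀ j, j + 1 ≤ n → (Y.X j ⟶ N.X (j + 1))),
    (∀ j (hj : j + 1 ≤ n),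
      ι₁ j hj ≫ p j hj = 𝟙 _ ∧ ι₂ j hj ≫ q j hj = 𝟙 _ ∧
      ι₁ j hj ≫ q j hj = 0 ∧ ι₂ j hj ≫ p j hj = 0 ∧
      p j hj ≫ ι₁ j hj + q j hj ≫ ι₂ j hj = 𝟙 (N.X (j + 1))) ∧
    (∀ hn : 1 ≤ n,
      N.d 0 = eqToHom h0 ≫ ((-(X.d 0)) ≫ ι₁ 0 hn + φ.f 0 ≫ ι₂ 0 hn)) ∧
    (∀ j (hj : j + 2 ≤ n),
      N.d (j + 1) = p j (by omega) ≫ (-(X.d (j + 1))) ≫ ι₁ (j + 1) hj +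
        p j (by omega) ≫ φ.f (j + 1) ≫ ι₂ (j + 1) hj +
        q j (by omega) ≫ Y.d j ≫ ι₂ (j + 1) hj) ∧
    (∀ j (hj : j + 1 = n),
      N.d (j + 1) = p j (by omega) ≫ φ.f (j + 1) ≫ eqToHom (by rw [hj, htop]) +
        q j (by omega) ≫ Y.d j ≫ eqToHom (by rw [hj, htop]))

variable (C n)

/-- An `n`-exangulated category `(C, E, s)` in the sense of Herschend–Liu–Nakaoka, encoded by
its additive bifunctor `E`, the class `Dist` of (`s`-)distinguished `n`-exangles, and the
axioms: `E` is biadditive, distinguished `n`-exangles are `n`-exangles (R1), the realization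
is defined on every extension (R0 existence of lifts, surjectivity of `s`, invariance under
homotopy equivalence with fixed ends), (R2), (EA1), (EA2) and (EA2ᵒᵖ). -/
structure NExang [HasZeroObject C] extends NExangData C n where
  additive_snd : ∀ A : Cᵒᵖ, (E.obj A).Additive
  additive_fst : ∀ B : C, (E.flip.obj B).Additive
  -- (R1): distinguished n-exangles are n-exangles
  ex_contra_mid : ∀ X δ, Dist X δ → ∀ i, i + 1 ≤ n → ∀ (W : C) (h : W ⟶ X.X (i + 1)),
    h ≫ X.d (i + 1) = 0 → ∃ g : W ⟶ X.X i, g ≫ X.d i = h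
  ex_contra_top : ∀ X δ, Dist X δ → ∀ (W : C) (h : W ⟶ X.X (n + 1)),
    (E.map h.op).app (X.X 0) δ = 0 → ∃ g : W ⟶ X.X n, g ≫ X.d n = h
  ex_co_mid : ∀ X δ, Dist X δ → ∀ i, i + 1 ≤ n → ∀ (W : C) (h : X.X (i + 1) ⟶ W),
    X.d i ≫ h = 0 → ∃ g : X.X (i + 2) ⟶ W, X.d (i + 1) ≫ g = h
  ex_co_bot : ∀ X δ, Dist X δ → ∀ (W : C) (h : X.X 0 ⟶ W),
    ((E.obj (op (X.X (n + 1)))).map h) δ = 0 → ∃ g : X.X 1 ⟶ W, X.d 0 ≫ g = h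
  attached_push : ∀ X δ, Dist X δ → ((E.obj (op (X.X (n + 1)))).map (X.d 0)) δ = 0
  attached_pull : ∀ X δ, Dist X δ → (E.map (X.d n).op).app (X.X 0) δ = 0
  -- (R0): lifts of morphisms of extensions
  lift : ∀ X Y δ ρ, Dist X δ → Dist Y ρ →
    ∀ (a : X.X 0 ⟶ Y.X 0) (c : X.X (n + 1) ⟶ Y.X (n + 1)),
      ((E.obj (op (X.X (n + 1)))).map a) δ = (E.map c.op).app (Y.X 0) ρ →
      ∃ φ : ChainMap X Y, φ.f 0 = a ∧ φ.f (n + 1) = c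
  -- `s` realizes every extension
  realize : ∀ (A B : C) (δ : (E.obj (op B)).obj A),
    ∃ (X : NComplex C n) (h0 : X.X 0 = A) (h1 : X.X (n + 1) = B),
      Dist X (ETransport E h0.symm h1.symm δ)
  -- `s(δ)` is a single homotopy class with fixed ends…
  unique : ∀ X Y δ (h0 : X.X 0 = Y.X 0) (h1 : X.X (n + 1) = Y.X (n + 1)),
    Dist X δ → Dist Y (ETransport E h0 h1 δ) → FixedHtpyEquiv X Y h0 h1
  -- …and is closed under homotopy equivalences with fixed ends
  closedHtpy : ∀ X Y δ (h0 : X.X 0 = Y.X 0) (h1 : X.X (n + 1) = Y.X (n + 1)),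
    Dist X δ → FixedHtpyEquiv X Y h0 h1 → Dist Y (ETransport E h0 h1 δ)
  -- (R2)
  realize_zero₁ : ∀ A : C, Dist (splitCpx A 0) 0
  realize_zero₂ : ∀ A : C, Dist (splitCpx A n) 0
  -- (EA1)
  ea1_infl : ∀ {A B Z : C} (f : A ⟶ B) (g : B ⟶ Z),
    toNExangData.Inflation f → toNExangData.Inflation g → toNExangData.Inflation (f ≫ g)
  ea1_defl : ∀ {A B Z : C} (f : A ⟶ B) (g : B ⟶ Z),
    toNExangData.Deflation f → toNExangData.Deflation g → toNExangData.Deflation (f ≫ g)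
  -- (EA2): good lifts of (𝟙, c) exist, with distinguished mapping cone
  ea2 : ∀ {A D Co : C} (ρ : (E.obj (op D)).obj A) (c : Co ⟶ D) (X Y : NComplex C n)
    (hX0 : X.X 0 = A) (hXn : X.X (n + 1) = Co) (hY0 : Y.X 0 = A) (hYn : Y.X (n + 1) = D),
    Dist X (ETransport E hX0.symm hXn.symm ((E.map c.op).app A ρ)) →
    Dist Y (ETransport E hY0.symm hYn.symm ρ) →
    ∃ φ : ChainMap X Y, φ.f 0 = eqToHom (hX0.trans hY0.symm) ∧
      φ.f (n + 1) = eqToHom hXn ≫ c ≫ eqToHom hYn.symm ∧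
      ∃ M : NComplex C n, IsMappingCone φ M ∧
        ∃ (hM0 : M.X 0 = X.X 1) (hMn : M.X (n + 1) = Y.X (n + 1)),
          Dist M (ETransport E hM0.symm (hMn.trans hYn).symm
            (((E.obj (op D)).map (eqToHom hX0.symm ≫ X.d 0)) ρ))
  -- (EA2ᵒᵖ): good lifts of (a, 𝟙) exist, with distinguished mapping cocone
  ea2op : ∀ {A B D : C} (ρ : (E.obj (op D)).obj A) (a : A ⟶ B) (X Y : NComplex C n)
    (hX0 : X.X 0 = A) (hXn : X.X (n + 1) = D) (hY0 : Y.X 0 = B) (hYn : Y.X (n + 1) = D),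
    Dist X (ETransport E hX0.symm hXn.symm ρ) →
    Dist Y (ETransport E hY0.symm hYn.symm (((E.obj (op D)).map a) ρ)) →
    ∃ φ : ChainMap X Y, φ.f 0 = eqToHom hX0 ≫ a ≫ eqToHom hY0.symm ∧
      φ.f (n + 1) = eqToHom (hXn.trans hYn.symm) ∧
      ∃ N : NComplex C n, IsMappingCocone φ N ∧
        ∃ (hN0 : N.X 0 = X.X 0) (hNn : N.X (n + 1) = Y.X n),
          Dist N (ETransport E (hN0.trans hX0).symm hNn.symm
            ((E.map (Y.d n ≫ eqToHom hYn).op).app A ρ))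

end Exang

section Sub

variable {C : Type u} [Category.{v} C] [Preadditive C] {n : ℕ}

/-- The subcategory determined by `𝒜 ⊆ C` is closed under isomorphisms, finite direct sums
and direct summands. -/
def GoodSubcat [HasBinaryBiproducts C] (𝒜 : Set C) : Prop :=
  (∀ (A B : C), A ∈ 𝒜 → (A ≅ B) → B ∈ 𝒜) ∧
  (∀ (A B : C), A ∈ 𝒜 → B ∈ 𝒜 → (A ⊞ B) ∈ 𝒜) ∧
  (∀ (A B : C) (r : A ⟶ B) (s : B ⟶ A), r ≫ s = 𝟙 A → B ∈ 𝒜 → A ∈ 𝒜)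

/-- `𝒜` is an `n`-extension closed subcategory of `(C, E, s)`: every `E`-extension between
objects of `𝒜` is realized by a distinguished `n`-exangle whose terms in degrees `1,…,n`
belong to `𝒜`. -/
def NExtClosed (S : NExangData C n) (𝒜 : Set C) : Prop :=
  ∀ (A B : C), A ∈ 𝒜 → B ∈ 𝒜 → ∀ δ : (S.E.obj (op B)).obj A,
    ∃ (X : NComplex C n) (h0 : X.X 0 = A) (h1 : X.X (n + 1) = B),
      S.Dist X (ETransport S.E h0.symm h1.symm δ) ∧ ∀ i, 1 ≤ i → i ≤ n → X.X i ∈ 𝒜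

/-- `f` is a `t`-inflation for the structure inherited by the `n`-extension closed
subcategory `𝒜`: it is the `0`-th differential of a distinguished `n`-exangle of `C` all of
whose terms in degrees `1,…,n+1` lie in `𝒜`. -/
def TInfl (S : NExangData C n) (𝒜 : Set C) {A B : C} (f : A ⟶ B) : Prop :=
  ∃ (X : NComplex C n) (δ : (S.E.obj (op (X.X (n + 1)))).obj (X.X 0))
    (h0 : X.X 0 = A) (h1 : X.X 1 = B),
      S.Dist X δ ∧ (∀ i, 1 ≤ i → i ≤ n + 1 → X.X i ∈ 𝒜) ∧
      X.d 0 = eqToHom h0 ≫ f ≫ eqToHom h1.symm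

/-- `P` is a projective object of the `n`-exangulated category. -/
def IsProj (S : NExangData C n) (P : C) : Prop :=
  ∀ X δ, S.Dist X δ → ∀ c : P ⟶ X.X (n + 1), ∃ b : P ⟶ X.X n, b ≫ X.d n = c

/-- `I` is an injective object of the `n`-exangulated category. -/
def IsInj (S : NExangData C n) (I : C) : Prop :=
  ∀ X δ, S.Dist X δ → ∀ c : X.X 0 ⟶ I, ∃ b : X.X 1 ⟶ I, X.d 0 ≫ b = c

/-- The `n`-exangulated category has enough projectives. -/
def EnoughProj (S : NExangData C n) : Prop :=
  ∀ Z : C, ∃ (X : NComplex C n) (δ : (S.E.obj (op (X.X (n + 1)))).obj (X.X 0)),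
    X.X (n + 1) = Z ∧ S.Dist X δ ∧ ∀ i, 1 ≤ i → i ≤ n → IsProj S (X.X i)

/-- The `n`-exangulated category has enough injectives. -/
def EnoughInj (S : NExangData C n) : Prop :=
  ∀ Z : C, ∃ (X : NComplex C n) (δ : (S.E.obj (op (X.X (n + 1)))).obj (X.X 0)),
    X.X 0 = Z ∧ S.Dist X δ ∧ ∀ i, 1 ≤ i → i ≤ n → IsInj S (X.X i)

/-- `Ω𝒜 = CoCone(𝒫, 𝒜)`: objects `B` admitting a distinguished `n`-exangle
`B → P₁ → ⋯ → P_n → A'` with all `P_i` projective and `A' ∈ 𝒜`. -/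
def OmegaSet (S : NExangData C n) (𝒜 : Set C) : Set C :=
  {B | ∃ (X : NComplex C n) (δ : (S.E.obj (op (X.X (n + 1)))).obj (X.X 0)),
    X.X 0 = B ∧ S.Dist X δ ∧ (∀ i, 1 ≤ i → i ≤ n → IsProj S (X.X i)) ∧ X.X (n + 1) ∈ 𝒜}

/-- `Σ𝒜 = Cone(𝒜, ℐ)`: objects `Z` admitting a distinguished `n`-exangle
`A' → I₁ → ⋯ → I_n → Z` with all `I_i` injective and `A' ∈ 𝒜`. -/
def SigmaSet (S : NExangData C n) (𝒜 : Set C) : Set C :=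
  {Z | ∃ (X : NComplex C n) (δ : (S.E.obj (op (X.X (n + 1)))).obj (X.X 0)),
    X.X (n + 1) = Z ∧ S.Dist X δ ∧ (∀ i, 1 ≤ i → i ≤ n → IsInj S (X.X i)) ∧ X.X 0 ∈ 𝒜}

end Sub

section NExact

variable {C : Type u} [Category.{v} C] [Preadditive C] {n : ℕ}

/-- A complex concentrated in degrees `0,…,n+1` is an `n`-exact sequence: for every object
`W` the induced sequences `0 → Hom(W,X₀) → ⋯ → Hom(W,X_{n+1})` and
`0 → Hom(X_{n+1},W) → ⋯ → Hom(X₀,W)` are exact. -/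
structure IsNExactSeq (X : NComplex C n) : Prop where
  mono : ∀ (W : C) (h : W ⟶ X.X 0), h ≫ X.d 0 = 0 → h = 0
  epi : ∀ (W : C) (h : X.X (n + 1) ⟶ W), X.d n ≫ h = 0 → h = 0
  ex_contra : ∀ i, i + 1 ≤ n → ∀ (W : C) (h : W ⟶ X.X (i + 1)),
    h ≫ X.d (i + 1) = 0 → ∃ g : W ⟶ X.X i, g ≫ X.d i = h
  ex_co : ∀ i, i + 1 ≤ n → ∀ (W : C) (h : X.X (i + 1) ⟶ W),
    X.d i ≫ h = 0 → ∃ g : X.X (i + 2) ⟶ W, X.d (i + 1) ≫ g = h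

/-- A weak isomorphism of `n`-exact sequences: a morphism `f•` such that `f_i` and `f_{i+1}`
are isomorphisms for some `0 ≤ i ≤ n+1` (with `f_{n+2} := f₀`). -/
def IsWeakIso {X Y : NComplex C n} (φ : ChainMap X Y) : Prop :=
  (∃ i, i ≤ n ∧ IsIso (φ.f i) ∧ IsIso (φ.f (i + 1))) ∨
  (IsIso (φ.f (n + 1)) ∧ IsIso (φ.f 0))

/-- `f• : X• → Y•` (with `f_{n+1}` an identification of the top terms) is an `n`-pushout
diagram of the bottom part `X₀ → ⋯ → X_n` along `f₀`: the mapping-cone complex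
`X₀ → X₁ ⊕ Y₀ → ⋯ → X_n ⊕ Y_{n-1} → Y_n` is right exact, written out componentwise. -/
structure IsNPushout {X Y : NComplex C n} (φ : ChainMap X Y) : Prop where
  inj : ∀ k, k + 1 = n → ∀ (W : C) (h : Y.X (k + 1) ⟶ W),
    φ.f (k + 1) ≫ h = 0 → Y.d k ≫ h = 0 → h = 0
  ex1 : 2 ≤ n → ∀ (W : C) (u : X.X 1 ⟶ W) (v : Y.X 0 ⟶ W),
    φ.f 0 ≫ v = X.d 0 ≫ u →
    ∃ (u' : X.X 2 ⟶ W) (v' : Y.X 1 ⟶ W),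
      u = φ.f 1 ≫ v' - X.d 1 ≫ u' ∧ v = Y.d 0 ≫ v'
  exMid : ∀ k, k + 3 ≤ n → ∀ (W : C) (u : X.X (k + 2) ⟶ W) (v : Y.X (k + 1) ⟶ W),
    φ.f (k + 1) ≫ v = X.d (k + 1) ≫ u → Y.d k ≫ v = 0 →
    ∃ (u' : X.X (k + 3) ⟶ W) (v' : Y.X (k + 2) ⟶ W),
      u = φ.f (k + 2) ≫ v' - X.d (k + 2) ≫ u' ∧ v = Y.d (k + 1) ≫ v'
  exTop : ∀ k, k + 2 = n → ∀ (W : C) (u : X.X (k + 2) ⟶ W) (v : Y.X (k + 1) ⟶ W),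
    φ.f (k + 1) ≫ v = X.d (k + 1) ≫ u → Y.d k ≫ v = 0 →
    ∃ h : Y.X (k + 2) ⟶ W, u = φ.f (k + 2) ≫ h ∧ v = Y.d (k + 1) ≫ h
  exTop1 : 1 = n → ∀ (W : C) (u : X.X 1 ⟶ W) (v : Y.X 0 ⟶ W),
    φ.f 0 ≫ v = X.d 0 ≫ u →
    ∃ h : Y.X 1 ⟶ W, u = φ.f 1 ≫ h ∧ v = Y.d 0 ≫ h

/-- `f• : X• → Y•` (with `f₀` an identification of the bottom terms) is an `n`-pullback
diagram of the top part `Y₁ → ⋯ → Y_{n+1}` along `f_{n+1}`: the complex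
`X₁ → X₂ ⊕ Y₁ → ⋯ → X_{n+1} ⊕ Y_n → Y_{n+1}` is left exact, written out componentwise. -/
structure IsNPullback {X Y : NComplex C n} (φ : ChainMap X Y) : Prop where
  inj : ∀ (W : C) (h : W ⟶ X.X 1), h ≫ X.d 1 = 0 → h ≫ φ.f 1 = 0 → h = 0
  ex1 : 2 ≤ n → ∀ (W : C) (u : W ⟶ X.X 2) (v : W ⟶ Y.X 1),
    u ≫ X.d 2 = 0 → u ≫ φ.f 2 + v ≫ Y.d 1 = 0 →
    ∃ w : W ⟶ X.X 1, u = -(w ≫ X.d 1) ∧ v = w ≫ φ.f 1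
  exMid : ∀ k, k + 3 ≤ n → ∀ (W : C) (u : W ⟶ X.X (k + 3)) (v : W ⟶ Y.X (k + 2)),
    u ≫ X.d (k + 3) = 0 → u ≫ φ.f (k + 3) + v ≫ Y.d (k + 2) = 0 →
    ∃ (u₀ : W ⟶ X.X (k + 2)) (v₀ : W ⟶ Y.X (k + 1)),
      u = -(u₀ ≫ X.d (k + 2)) ∧ v = u₀ ≫ φ.f (k + 2) + v₀ ≫ Y.d (k + 1)
  exTop : ∀ k, k + 2 = n → ∀ (W : C) (u : W ⟶ X.X (k + 3)) (v : W ⟶ Y.X (k + 2)),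
    u ≫ φ.f (k + 3) + v ≫ Y.d (k + 2) = 0 →
    ∃ (u₀ : W ⟶ X.X (k + 2)) (v₀ : W ⟶ Y.X (k + 1)),
      u = -(u₀ ≫ X.d (k + 2)) ∧ v = u₀ ≫ φ.f (k + 2) + v₀ ≫ Y.d (k + 1)
  exTop1 : 1 = n → ∀ (W : C) (u : W ⟶ X.X 2) (v : W ⟶ Y.X 1),
    u ≫ φ.f 2 + v ≫ Y.d 1 = 0 →
    ∃ w : W ⟶ X.X 1, u = -(w ≫ X.d 1) ∧ v = w ≫ φ.f 1

variable (C n)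

/-- An `n`-exact category in the sense of Jasso: an additive category together with a class
of `n`-exact sequences (the admissible ones, or conflations), closed under weak
isomorphisms, containing the trivial sequences and satisfying the axioms (E1), (E1ᵒᵖ),
(E2) (existence of `n`-pushouts of conflations along morphisms from the first term) and
(E2ᵒᵖ). -/
structure NExactCategory [HasZeroObject C] where
  conflation : NComplex C n → Prop
  nexact : ∀ X, conflation X → IsNExactSeq X
  closed_weakIso₁ : ∀ (X Y : NComplex C n) (φ : ChainMap X Y),
    conflation X → IsNExactSeq Y → IsWeakIso φ → conflation Y
  closed_weakIso₂ : ∀ (X Y : NComplex C n) (φ : ChainMap X Y),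
    conflation Y → IsNExactSeq X → IsWeakIso φ → conflation X
  e0 : ∀ A : C, conflation (splitCpx A 0)
  e0' : ∀ A : C, conflation (splitCpx A n)
  e1 : ∀ {A B Z : C} (f : A ⟶ B) (g : B ⟶ Z),
    (∃ (X : NComplex C n) (h0 : X.X 0 = A) (h1 : X.X 1 = B), conflation X ∧
        X.d 0 = eqToHom h0 ≫ f ≫ eqToHom h1.symm) →
    (∃ (X : NComplex C n) (h0 : X.X 0 = B) (h1 : X.X 1 = Z), conflation X ∧
        X.d 0 = eqToHom h0 ≫ g ≫ eqToHom h1.symm) →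
    (∃ (X : NComplex C n) (h0 : X.X 0 = A) (h1 : X.X 1 = Z), conflation X ∧
        X.d 0 = eqToHom h0 ≫ (f ≫ g) ≫ eqToHom h1.symm)
  e1op : ∀ {A B Z : C} (f : A ⟶ B) (g : B ⟶ Z),
    (∃ (X : NComplex C n) (h0 : X.X n = A) (h1 : X.X (n + 1) = B), conflation X ∧
        X.d n = eqToHom h0 ≫ f ≫ eqToHom h1.symm) →
    (∃ (X : NComplex C n) (h0 : X.X n = B) (h1 : X.X (n + 1) = Z), conflation X ∧
        X.d n = eqToHom h0 ≫ g ≫ eqToHom h1.symm) →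
    (∃ (X : NComplex C n) (h0 : X.X n = A) (h1 : X.X (n + 1) = Z), conflation X ∧
        X.d n = eqToHom h0 ≫ (f ≫ g) ≫ eqToHom h1.symm)
  e2 : ∀ X, conflation X → ∀ (B : C) (g : X.X 0 ⟶ B),
    ∃ (Y : NComplex C n) (φ : ChainMap X Y) (h0 : Y.X 0 = B)
      (htop : X.X (n + 1) = Y.X (n + 1)),
      φ.f 0 = g ≫ eqToHom h0.symm ∧ φ.f (n + 1) = eqToHom htop ∧
      IsNPushout φ ∧ conflation Y
  e2op : ∀ Y, conflation Y → ∀ (B : C) (g : B ⟶ Y.X (n + 1)),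
    ∃ (X : NComplex C n) (φ : ChainMap X Y) (htop : X.X (n + 1) = B)
      (h0 : X.X 0 = Y.X 0),
      φ.f (n + 1) = eqToHom htop ≫ g ∧ φ.f 0 = eqToHom h0 ∧
      IsNPullback φ ∧ conflation X

end NExact


/-- A distinguished `n`-exangle is minimal if all its inner differentials
`X₁ → X₂, …, X_{n-1} → X_n` lie in the Jacobson radical of `C`. -/
def MinimalCpx {C : Type u} [Category.{v} C] [Preadditive C] {n : ℕ} (X : NComplex C n) :
    Prop :=
  ∀ i, 1 ≤ i → i + 1 ≤ n → InRad (X.d i)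

/-- Direct sum of a finite list of split complexes `split_{p.2}(p.1)`. -/
noncomputable def sumSplitCpx {C : Type u} [Category.{v} C] [Preadditive C] [HasZeroObject C]
    [HasBinaryBiproducts C] {n : ℕ} (L : List (C × ℕ)) : NComplex C n :=
  L.foldr (fun p acc => biprodC (splitCpx p.1 p.2) acc) zeroCpx

/-!
Normalise `h` so that `g ≫ f ≫ h = 𝟙 Z` and expand this composite along the two biproduct
decompositions. The `(1,1)` entry contributes `g₁ ≫ f₁₁ ≫ h₁`, which lies in the radical, and
all other contributions factor through `X₂ ⊞ Y₂`, say as `r ≫ t`. Hence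
`r ≫ t = 𝟙 Z - g₁ ≫ f₁₁ ≫ h₁` is invertible (via Jacobson's lemma: `1 - ab` is invertible
iff `1 - ba` is), which exhibits `Z` as a retract of `X₂ ⊞ Y₂`.
-/

open Preadditive

lemma isIso_id_sub_comp_comm {X Y : C} (f : X ⟶ Y) (g : Y ⟶ X) [IsIso (𝟙 X - f ≫ g)] :
    IsIso (𝟙 Y - g ≫ f) := by
  refine ⟨𝟙 Y + g ≫ inv (𝟙 X - f ≫ g) ≫ f, ?_, ?_⟩
  · calc (𝟙 Y - g ≫ f) ≫ (𝟙 Y + g ≫ inv (𝟙 X - f ≫ g) ≫ f)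
        = 𝟙 Y - g ≫ f + g ≫ ((𝟙 X - f ≫ g) ≫ inv (𝟙 X - f ≫ g)) ≫ f := by
          simp only [sub_comp, comp_add, comp_sub, Category.assoc, Category.id_comp,
            Category.comp_id]
      _ = 𝟙 Y := by rw [IsIso.hom_inv_id, Category.id_comp]; abel
  · calc (𝟙 Y + g ≫ inv (𝟙 X - f ≫ g) ≫ f) ≫ (𝟙 Y - g ≫ f)
        = 𝟙 Y - g ≫ f + g ≫ (inv (𝟙 X - f ≫ g) ≫ (𝟙 X - f ≫ g)) ≫ f := by
          simp only [sub_comp, add_comp, comp_sub, Category.assoc, Category.id_comp,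
            Category.comp_id]
          abel
      _ = 𝟙 Y := by rw [IsIso.inv_hom_id, Category.id_comp]; abel

lemma InRad.isIso_id_sub_comp_comp {X Y Z : C} {f : X ⟶ Y} (hf : InRad f) (a : Z ⟶ X)
    (b : Y ⟶ Z) : IsIso (𝟙 Z - a ≫ f ≫ b) :=
  have : IsIso (𝟙 X - (f ≫ b) ≫ a) := by simpa only [Category.assoc] using hf (b ≫ a)
  isIso_id_sub_comp_comm (f ≫ b) a

lemma comp_comp_eq_add_lift_comp_desc [HasBinaryBiproducts C] {Z X₁ X₂ Y₁ Y₂ W : C}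
    (g : Z ⟶ X₁ ⊞ X₂) (f : X₁ ⊞ X₂ ⟶ Y₁ ⊞ Y₂) (h : Y₁ ⊞ Y₂ ⟶ W) :
    g ≫ f ≫ h = (g ≫ biprod.fst) ≫ (biprod.inl ≫ f ≫ biprod.fst) ≫ (biprod.inl ≫ h) +
      biprod.lift (g ≫ biprod.snd) (g ≫ biprod.fst ≫ biprod.inl ≫ f ≫ biprod.snd) ≫
        biprod.desc (biprod.inr ≫ f ≫ h) (biprod.inr ≫ h) := by
  rw [← Category.id_comp h, ← biprod.total, ← Category.id_comp (f ≫ _), ← biprod.total]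
  simp only [biprod.lift_desc, add_comp, comp_add, Category.assoc, biprod.inl_fst_assoc,
    biprod.inl_snd_assoc, biprod.inr_fst_assoc, biprod.inr_snd_assoc, zero_comp,
    add_zero, zero_add]
  abel

lemma inAdd_of_isIso_comp [HasFiniteBiproducts C] {Z W : C} {r : Z ⟶ W} {t : W ⟶ Z}
    (_ : IsIso (r ≫ t)) : InAdd W Z :=
  ⟨1, r ≫ biproduct.lift fun _ => 𝟙 W, biproduct.desc fun _ => t ≫ inv (r ≫ t), by
    rw [Category.assoc, biproduct.lift_desc, Fin.sum_univ_one, Category.id_comp,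
      ← Category.assoc, IsIso.hom_inv_id]⟩

theorem stmt0_general {C : Type u} [Category.{v} C] [Preadditive C] [HasFiniteBiproducts C]
    (X₁ X₂ Y₁ Y₂ : C) (f : X₁ ⊞ X₂ ⟶ Y₁ ⊞ Y₂)
    (hrad : InRad (biprod.inl ≫ f ≫ biprod.fst : X₁ ⟶ Y₁))
    (Z : C) (g : Z ⟶ X₁ ⊞ X₂) (h : Y₁ ⊞ Y₂ ⟶ Z) (hauto : IsIso (g ≫ f ≫ h)) :
    InAdd (X₂ ⊞ Y₂) Z := by
  obtain ⟨h', hsplit⟩ : ∃ h' : Y₁ ⊞ Y₂ ⟶ Z, g ≫ f ≫ h' = 𝟙 Z :=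
    ⟨h ≫ inv (g ≫ f ≫ h), by simpa only [Category.assoc] using IsIso.hom_inv_id (g ≫ f ≫ h)⟩
  have hrt := comp_comp_eq_add_lift_comp_desc g f h'
  rw [hsplit, ← sub_eq_iff_eq_add'] at hrt
  exact inAdd_of_isIso_comp (hrt ▸ hrad.isIso_id_sub_comp_comp _ _)

/-- Lemma 2.7 of Klapproth, used as Lemma `matrix` in the paper.
Let `C` be an additive Krull–Schmidt category and `f : X₁ ⊕ X₂ ⟶ Y₁ ⊕ Y₂` a morphism such
that `π₁ ∘ f ∘ ι₁` lies in the Jacobson radical of `C`.  Then every object `Z` admitting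
morphisms `g : Z ⟶ X₁ ⊕ X₂` and `h : Y₁ ⊕ Y₂ ⟶ Z` with `h ∘ f ∘ g` an automorphism of `Z`
satisfies `Z ∈ add (X₂ ⊕ Y₂)`. -/
theorem stmt0 {C : Type u} [Category.{v} C] [Preadditive C] [HasFiniteBiproducts C]
    (hKS : IsKrullSchmidt C) (X₁ X₂ Y₁ Y₂ : C) (f : X₁ ⊞ X₂ ⟶ Y₁ ⊞ Y₂)
    (hrad : InRad (biprod.inl ≫ f ≫ biprod.fst : X₁ ⟶ Y₁))
    (Z : C) (g : Z ⟶ X₁ ⊞ X₂) (h : Y₁ ⊞ Y₂ ⟶ Z) (hauto : IsIso (g ≫ f ≫ h)) :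
    InAdd (X₂ ⊞ Y₂) Z :=
  stmt0_general X₁ X₂ Y₁ Y₂ f hrad Z g h hauto

end NExangPaper
end

section
/- Let (C,E,s) be a Krull–Schmidt n-exangulated category and let A₀, A_{n+1} be objects of C. Then every E-extension δ ∈ E(A_{n+1}, A₀) admits a distinguished n-exangle realization A₀ → A₁ → A₂ → ⋯ → A_n → A_{n+1} in which all the intermediate differentials A₁ → A₂, …, A_{n-1} → A_n lie in the Jacobson radical of C. -/
open CategoryTheory CategoryTheory.Limits Opposite ZeroObject

universe v u

namespace NExangPaper

attribute [local instance] CategoryTheory.Limits.hasBinaryBiproducts_of_finite_biproducts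


variable {C : Type u} [Category.{v} C] [Preadditive C]

variable {n : ℕ}

/-!
Start from any realization of `δ` and decompose every middle term into finitely many objects
with local endomorphism rings. If an inner differential `d_i` is not radical, some component
between indecomposable summands of `X_i` and `X_{i+1}` is an isomorphism (a morphism outside the
radical factors the identity of a local object), and Gaussian elimination writes
`d_i = 𝟙_Z ⊕ g` for splittings `X_i ≅ Z ⊕ K`, `X_{i+1} ≅ Z ⊕ L`. Replacing `X_i, X_{i+1}` by
`K, L` gives a degreewise retract of `X` whose complement `Z → Z` is contractible, hence a complex
homotopy equivalent to `X` with the same ends, which again realizes `δ`. The number of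
indecomposable summands in degrees `1, …, n` drops, so iterating ends in a minimal realization.
-/

lemma _root_.IsIdempotentElem.eq_zero_or_eq_one_of_isLocalRing {R : Type*} [Ring R]
    [IsLocalRing R] {e : R} (he : IsIdempotentElem e) : e = 0 ∨ e = 1 := by
  rcases IsLocalRing.isUnit_or_isUnit_of_add_one (add_sub_cancel e 1) with hu | hu
  · exact Or.inr ((IsIdempotentElem.iff_eq_one_of_isUnit hu).1 he)
  · exact Or.inl (hu.mul_left_eq_zero.1 he.mul_one_sub_self)

section LocalObjects

variable {C : Type u} [Category.{v} C] [Preadditive C]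

lemma not_isZero_of_isLocalRing (Z : C) [IsLocalRing (End Z)] : ¬IsZero Z := by
  rw [IsZero.iff_id_eq_zero]
  exact one_ne_zero (α := End Z)

lemma isIso_of_comp_eq_id_of_isLocalRing {Z W : C} [IsLocalRing (End W)] (i : Z ⟶ W)
    (r : W ⟶ Z) (h : i ≫ r = 𝟙 Z) (hZ : ¬IsZero Z) : IsIso i := by
  have he : IsIdempotentElem (show End W from r ≫ i) := by
    change (r ≫ i) ≫ (r ≫ i) = r ≫ i
    simp [reassoc_of% h]
  rcases he.eq_zero_or_eq_one_of_isLocalRing with h0 | h1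
  · refine absurd ((IsZero.iff_id_eq_zero Z).2 ?_) hZ
    change r ≫ i = 0 at h0
    calc 𝟙 Z = i ≫ (r ≫ i) ≫ r := by simp [h]
      _ = 0 := by simp [h0]
  · exact ⟨r, h, h1⟩

variable [HasFiniteBiproducts C]

lemma exists_isIso_of_comp_eq_id_biproduct {J : Type} [Fintype J] {Y : J → C}
    (hY : ∀ j, IsLocalRing (End (Y j))) {Z : C} [IsLocalRing (End Z)]
    (s : Z ⟶ ⨁ Y) (r : ⨁ Y ⟶ Z) (h : s ≫ r = 𝟙 Z) :
    ∃ j, IsIso (s ≫ biproduct.π Y j) ∧ IsIso (biproduct.ι Y j ≫ r) := by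
  have hsum : (∑ j, s ≫ biproduct.π Y j ≫ biproduct.ι Y j ≫ r : End Z) =
      s ≫ (∑ j, biproduct.π Y j ≫ biproduct.ι Y j) ≫ r := by
    simp only [Preadditive.sum_comp, Preadditive.comp_sum, Category.assoc]
  rw [biproduct.total, Category.id_comp, h] at hsum
  obtain ⟨j, -, hj⟩ := IsLocalRing.exists_of_isUnit_sum (by rw [hsum]; exact isUnit_one)
  rw [isUnit_iff_isIso] at hj
  have hs : IsIso (s ≫ biproduct.π Y j) := by
    have := hY j
    refine isIso_of_comp_eq_id_of_isLocalRing _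
      (biproduct.ι Y j ≫ r ≫ inv (s ≫ biproduct.π Y j ≫ biproduct.ι Y j ≫ r)) ?_
      (not_isZero_of_isLocalRing Z)
    simpa only [Category.assoc] using
      IsIso.hom_inv_id (s ≫ biproduct.π Y j ≫ biproduct.ι Y j ≫ r)
  have : IsIso ((s ≫ biproduct.π Y j) ≫ biproduct.ι Y j ≫ r) := by
    simpa only [Category.assoc] using hj
  exact ⟨j, hs, IsIso.of_isIso_comp_left (s ≫ biproduct.π Y j) _⟩

end LocalObjects

section BinaryBiproducts

variable {C : Type u} [Category.{v} C] [Preadditive C] [HasBinaryBiproducts C]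

instance isIso_biprod_map {W X Y Z : C} (f : W ⟶ Y) (g : X ⟶ Z) [IsIso f] [IsIso g] :
    IsIso (biprod.map f g) :=
  (biprod.mapIso (asIso f) (asIso g)).isIso_hom

lemma isIso_of_isIso_schurComplement {P Q P' Q' : C} (f : P ⊞ Q ⟶ P' ⊞ Q')
    [IsIso (biprod.inl ≫ f ≫ biprod.fst)]
    [IsIso (biprod.inr ≫ f ≫ biprod.snd - (biprod.inr ≫ f ≫ biprod.fst) ≫
      inv (biprod.inl ≫ f ≫ biprod.fst) ≫ biprod.inl ≫ f ≫ biprod.snd)] :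
    IsIso f := by
  have hf : (Biprod.unipotentLower (-(biprod.inr ≫ f ≫ biprod.fst) ≫
        inv (biprod.inl ≫ f ≫ biprod.fst))).hom ≫
      Biprod.ofComponents (biprod.inl ≫ f ≫ biprod.fst) (biprod.inl ≫ f ≫ biprod.snd)
        (biprod.inr ≫ f ≫ biprod.fst) (biprod.inr ≫ f ≫ biprod.snd) ≫
      (Biprod.unipotentUpper (-inv (biprod.inl ≫ f ≫ biprod.fst) ≫
        biprod.inl ≫ f ≫ biprod.snd)).hom =
      biprod.map (biprod.inl ≫ f ≫ biprod.fst) (biprod.inr ≫ f ≫ biprod.snd -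
        (biprod.inr ≫ f ≫ biprod.fst) ≫ inv (biprod.inl ≫ f ≫ biprod.fst) ≫
          biprod.inl ≫ f ≫ biprod.snd) :=
    (Biprod.gaussian' _ _ _ _).2.2.2
  rw [Biprod.ofComponents_eq, ← Iso.eq_inv_comp, ← Iso.eq_comp_inv] at hf
  rw [hf]
  infer_instance

lemma exists_iso_biprod_map_id_of_isIso {P Q P' Q' : C} (f : P ⊞ Q ⟶ P' ⊞ Q')
    [IsIso (biprod.inl ≫ f ≫ biprod.fst)] :
    ∃ (U : P ⊞ Q ≅ P ⊞ Q) (V : P' ⊞ Q' ≅ P ⊞ Q') (g : Q ⟶ Q'),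
      U.inv ≫ f ≫ V.hom = biprod.map (𝟙 P) g := by
  obtain ⟨L, R, g, hLR⟩ := Biprod.gaussian f
  refine ⟨L.symm, R ≪≫ biprod.mapIso (asIso (biprod.inl ≫ f ≫ biprod.fst)).symm (Iso.refl _),
    g, ?_⟩
  calc L.hom ≫ f ≫ R.hom ≫ biprod.map (inv (biprod.inl ≫ f ≫ biprod.fst)) (𝟙 _)
      = (L.hom ≫ f ≫ R.hom) ≫ biprod.map (inv (biprod.inl ≫ f ≫ biprod.fst)) (𝟙 _) := by
        simp only [Category.assoc]
    _ = biprod.map (𝟙 P) g := by ext <;> simp [hLR]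

lemma isIso_id_sub_of_isIso_id_sub_schur {P Q : C} (t : P ⊞ Q ⟶ P ⊞ Q)
    [IsIso (𝟙 P - biprod.inl ≫ t ≫ biprod.fst)]
    [IsIso (𝟙 Q - (biprod.inr ≫ t ≫ biprod.snd + (biprod.inr ≫ t ≫ biprod.fst) ≫
      inv (𝟙 P - biprod.inl ≫ t ≫ biprod.fst) ≫ biprod.inl ≫ t ≫ biprod.snd))] :
    IsIso (𝟙 (P ⊞ Q) - t) := by
  have e₁₁ : biprod.inl ≫ (𝟙 _ - t) ≫ biprod.fst = 𝟙 _ - biprod.inl ≫ t ≫ biprod.fst := by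
    simp
  have : IsIso (biprod.inl ≫ (𝟙 _ - t) ≫ biprod.fst) := by rw [e₁₁]; infer_instance
  suffices IsIso (biprod.inr ≫ (𝟙 _ - t) ≫ biprod.snd - (biprod.inr ≫ (𝟙 _ - t) ≫ biprod.fst) ≫
      inv (biprod.inl ≫ (𝟙 _ - t) ≫ biprod.fst) ≫ biprod.inl ≫ (𝟙 _ - t) ≫ biprod.snd) from
    isIso_of_isIso_schurComplement _
  convert (inferInstance : IsIso (𝟙 Q - (biprod.inr ≫ t ≫ biprod.snd +
      (biprod.inr ≫ t ≫ biprod.fst) ≫ inv (𝟙 P - biprod.inl ≫ t ≫ biprod.fst) ≫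
        biprod.inl ≫ t ≫ biprod.snd))) using 1
  simp only [e₁₁]
  simp only [Preadditive.comp_sub, Preadditive.sub_comp, Category.id_comp,
    biprod.inr_snd, biprod.inr_fst, biprod.inl_snd, zero_sub, Preadditive.neg_comp,
    Preadditive.comp_neg, neg_neg]
  abel

end BinaryBiproducts

section Radical

variable {C : Type u} [Category.{v} C] [Preadditive C]

lemma not_isIso_add_of_isLocalRing {Z : C} [IsLocalRing (End Z)] {f g : Z ⟶ Z}
    (hf : ¬IsIso f) (hg : ¬IsIso g) : ¬IsIso (f + g) := by
  rw [← isUnit_iff_isIso] at hf hg ⊢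
  exact IsLocalRing.nonunits_add (R := End Z) hf hg

lemma isIso_id_sub_of_isLocalRing {Z : C} [IsLocalRing (End Z)] {f : Z ⟶ Z} (hf : ¬IsIso f) :
    IsIso (𝟙 Z - f) := by
  rw [← isUnit_iff_isIso] at hf ⊢
  exact (IsLocalRing.isUnit_or_isUnit_of_add_one
    (add_sub_cancel (show End Z from f) 1)).resolve_left hf

variable [HasFiniteBiproducts C]

noncomputable def biproductIsoBiprodSuccAbove {k : ℕ} (Y : Fin (k + 1) → C) (j : Fin (k + 1)) :
    (⨁ Y) ≅ Y j ⊞ ⨁ (Y ∘ j.succAbove) where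
  hom := biprod.lift (biproduct.π Y j) (biproduct.lift fun l => biproduct.π Y (j.succAbove l))
  inv := biprod.desc (biproduct.ι Y j) (biproduct.desc fun l => biproduct.ι Y (j.succAbove l))
  hom_inv_id := by
    rw [biprod.lift_desc, biproduct.lift_desc, ← biproduct.total]
    exact (Fin.sum_univ_succAbove (fun l => biproduct.π Y l ≫ biproduct.ι Y l) j).symm
  inv_hom_id := by
    ext l l'
    · simp
    · simp [(Fin.succAbove_ne j _).symm]
    · simp [Fin.succAbove_ne j _]
    · by_cases hll : l = l'
      · subst hll; simp
      · simp [biproduct.ι_π_ne _ hll,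
          biproduct.ι_π_ne _ (fun h => hll (Fin.succAbove_right_injective h))]

/-- Induction on the number of summands: the corner of `𝟙 - h` at the summand `Y 0` is invertible
because `End (Y 0)` is local, and the Schur complement satisfies the same hypothesis. -/
lemma isIso_id_sub_of_forall_not_isIso {k : ℕ} (Y : Fin k → C)
    (hY : ∀ j, IsLocalRing (End (Y j))) (h : ⨁ Y ⟶ ⨁ Y)
    (hh : ∀ (Z : C) [IsLocalRing (End Z)] (a : Z ⟶ ⨁ Y) (c : ⨁ Y ⟶ Z), ¬IsIso (a ≫ h ≫ c)) :
    IsIso (𝟙 (⨁ Y) - h) := by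
  induction k with
  | zero =>
    have hzero : IsZero (⨁ Y) := (IsZero.iff_id_eq_zero _).2 (by rw [← biproduct.total]; simp)
    exact hzero.isIso hzero _
  | succ k ih =>
    let ω := biproductIsoBiprodSuccAbove Y 0
    set t := ω.inv ≫ h ≫ ω.hom with ht
    have := hY 0
    have : IsIso (𝟙 _ - biprod.inl ≫ t ≫ biprod.fst) := isIso_id_sub_of_isLocalRing
      (by simpa only [ht, Category.assoc] using hh _ (biprod.inl ≫ ω.inv) (ω.hom ≫ biprod.fst))
    have : IsIso (𝟙 _ - (biprod.inr ≫ t ≫ biprod.snd + (biprod.inr ≫ t ≫ biprod.fst) ≫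
        inv (𝟙 _ - biprod.inl ≫ t ≫ biprod.fst) ≫ biprod.inl ≫ t ≫ biprod.snd)) := by
      refine ih _ (fun j => hY _) _ fun Z _ a c => ?_
      have := not_isIso_add_of_isLocalRing (hh _ (a ≫ biprod.inr ≫ ω.inv) (ω.hom ≫ biprod.snd ≫ c))
        (hh _ (a ≫ biprod.inr ≫ ω.inv) (ω.hom ≫ biprod.fst ≫
          inv (𝟙 _ - biprod.inl ≫ t ≫ biprod.fst) ≫ biprod.inl ≫ t ≫ biprod.snd ≫ c))
      simp only [Preadditive.add_comp, Preadditive.comp_add, Category.assoc, ht] at this ⊢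
      exact this
    have hω : 𝟙 (⨁ Y) - h = ω.hom ≫ (𝟙 _ - t) ≫ ω.inv := by
      simp only [ht, Preadditive.comp_sub, Preadditive.sub_comp, Category.id_comp,
        Category.assoc, Iso.hom_inv_id, Iso.hom_inv_id_assoc, Category.comp_id]
    rw [hω, isIso_comp_left_iff, isIso_comp_right_iff]
    exact isIso_id_sub_of_isIso_id_sub_schur t

end Radical

section KrullSchmidt

variable {C : Type u} [Category.{v} C] [Preadditive C] [HasFiniteBiproducts C]

def HasLocalDecomp (m : ℕ) (V : C) : Prop :=
  ∃ (Y : Fin m → C) (_ : V ≅ ⨁ Y), ∀ j, IsLocalRing (End (Y j))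

lemma exists_comp_eq_id_of_not_inRad {V W : C} {k : ℕ} {Y : Fin k → C}
    (hY : ∀ j, IsLocalRing (End (Y j))) (w : V ≅ ⨁ Y) {d : V ⟶ W} (hd : ¬InRad d) :
    ∃ (Z : C) (_ : IsLocalRing (End Z)) (a : Z ⟶ V) (b : W ⟶ Z), a ≫ d ≫ b = 𝟙 Z := by
  obtain ⟨g, hg⟩ : ∃ g, ¬IsIso (𝟙 V - d ≫ g) := by simpa [InRad] using hd
  by_contra! hno
  refine hg ?_
  have := isIso_id_sub_of_forall_not_isIso Y hY (w.inv ≫ d ≫ g ≫ w.hom) fun Z _ a c hac =>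
    hno Z ‹_› (a ≫ w.inv) (g ≫ w.hom ≫ c ≫ inv (a ≫ (w.inv ≫ d ≫ g ≫ w.hom) ≫ c))
      (by simpa only [Category.assoc] using IsIso.hom_inv_id (a ≫ (w.inv ≫ d ≫ g ≫ w.hom) ≫ c))
  have hw : 𝟙 V - d ≫ g = w.hom ≫ (𝟙 _ - w.inv ≫ d ≫ g ≫ w.hom) ≫ w.inv := by
    simp [Preadditive.comp_sub, Preadditive.sub_comp]
  rw [hw]
  infer_instance

lemma exists_isIso_component_of_not_inRad {V₁ V₂ : C} {k₁ k₂ : ℕ} {Y₁ : Fin k₁ → C}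
    {Y₂ : Fin k₂ → C} (hY₁ : ∀ j, IsLocalRing (End (Y₁ j))) (hY₂ : ∀ j, IsLocalRing (End (Y₂ j)))
    (w₁ : V₁ ≅ ⨁ Y₁) (w₂ : V₂ ≅ ⨁ Y₂) {d : V₁ ⟶ V₂} (hd : ¬InRad d) :
    ∃ j₁ j₂, IsIso (biproduct.ι Y₁ j₁ ≫ w₁.inv ≫ d ≫ w₂.hom ≫ biproduct.π Y₂ j₂) := by
  obtain ⟨Z, _, a, b, hab⟩ := exists_comp_eq_id_of_not_inRad hY₁ w₁ hd
  obtain ⟨j₁, -, h₁⟩ := exists_isIso_of_comp_eq_id_biproduct hY₁ (a ≫ w₁.hom) (w₁.inv ≫ d ≫ b)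
    (by simpa using hab)
  have := hY₁ j₁
  obtain ⟨j₂, h₂, -⟩ := exists_isIso_of_comp_eq_id_biproduct hY₂
    (biproduct.ι Y₁ j₁ ≫ w₁.inv ≫ d ≫ w₂.hom)
    (w₂.inv ≫ b ≫ inv (biproduct.ι Y₁ j₁ ≫ w₁.inv ≫ d ≫ b))
    (by simpa only [Category.assoc, Iso.hom_inv_id_assoc] using
      IsIso.hom_inv_id (biproduct.ι Y₁ j₁ ≫ w₁.inv ≫ d ≫ b))
  exact ⟨j₁, j₂, by simpa only [Category.assoc] using h₂⟩

lemma exists_biprod_map_id_of_not_inRad {V₁ V₂ : C} {m₁ m₂ : ℕ} (h₁ : HasLocalDecomp m₁ V₁)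
    (h₂ : HasLocalDecomp m₂ V₂) {d : V₁ ⟶ V₂} (hd : ¬InRad d) :
    ∃ (Z K L : C) (U : V₁ ≅ Z ⊞ K) (V : V₂ ≅ Z ⊞ L) (g : K ⟶ L),
      U.inv ≫ d ≫ V.hom = biprod.map (𝟙 Z) g ∧ 0 < m₁ ∧
        HasLocalDecomp (m₁ - 1) K ∧ HasLocalDecomp (m₂ - 1) L := by
  obtain ⟨Y₁, w₁, hY₁⟩ := h₁
  obtain ⟨Y₂, w₂, hY₂⟩ := h₂
  obtain ⟨j₁, j₂, hα⟩ := exists_isIso_component_of_not_inRad hY₁ hY₂ w₁ w₂ hd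
  obtain ⟨k₁, rfl⟩ := Nat.exists_eq_succ_of_ne_zero (Fin.pos j₁).ne'
  obtain ⟨k₂, rfl⟩ := Nat.exists_eq_succ_of_ne_zero (Fin.pos j₂).ne'
  let ω₁ := w₁ ≪≫ biproductIsoBiprodSuccAbove Y₁ j₁
  let ω₂ := w₂ ≪≫ biproductIsoBiprodSuccAbove Y₂ j₂
  have : IsIso (biprod.inl ≫ (ω₁.inv ≫ d ≫ ω₂.hom) ≫ biprod.fst) := by
    simpa [ω₁, ω₂, biproductIsoBiprodSuccAbove] using hα
  obtain ⟨U, V, g, hUV⟩ := exists_iso_biprod_map_id_of_isIso (ω₁.inv ≫ d ≫ ω₂.hom)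
  exact ⟨_, _, _, ω₁ ≪≫ U, ω₂ ≪≫ V, g, by simpa using hUV, k₁.succ_pos,
    ⟨_, Iso.refl _, fun _ => hY₁ _⟩, ⟨_, Iso.refl _, fun _ => hY₂ _⟩⟩

end KrullSchmidt

section Retract

variable {C : Type u} [Category.{v} C] [Preadditive C] {n : ℕ}

structure NComplex.DegreewiseRetract (X : NComplex C n) where
  Y : ℕ → C
  π : ∀ j, X.X j ⟶ Y j
  ι : ∀ j, Y j ⟶ X.X j
  ι_π : ∀ j, ι j ≫ π j = 𝟙 (Y j)
  comm : ∀ j, j ≤ n → X.d j ≫ π (j + 1) ≫ ι (j + 1) = π j ≫ ι j ≫ X.d j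

namespace NComplex.DegreewiseRetract

variable {X : NComplex C n} (R : X.DegreewiseRetract)

def complex : NComplex C n where
  X := R.Y
  d j := R.ι j ≫ X.d j ≫ R.π (j + 1)
  dd j hj := by
    calc (R.ι j ≫ X.d j ≫ R.π (j + 1)) ≫ R.ι (j + 1) ≫ X.d (j + 1) ≫ R.π (j + 1 + 1)
        = R.ι j ≫ (X.d j ≫ R.π (j + 1) ≫ R.ι (j + 1)) ≫ X.d (j + 1) ≫ R.π (j + 1 + 1) := by
          simp only [Category.assoc]
      _ = R.ι j ≫ R.π j ≫ R.ι j ≫ (X.d j ≫ X.d (j + 1)) ≫ R.π (j + 1 + 1) := by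
          rw [R.comm j (by omega)]
          simp only [Category.assoc]
      _ = 0 := by simp [X.dd j hj]

def toComplex : ChainMap X R.complex where
  f := R.π
  comm j hj := by
    have := R.comm j hj =≫ R.π (j + 1)
    simp only [Category.assoc, R.ι_π, Category.comp_id] at this
    exact this

def fromComplex : ChainMap R.complex X where
  f := R.ι
  comm j hj := by
    change (R.ι j ≫ X.d j ≫ R.π (j + 1)) ≫ R.ι (j + 1) = R.ι j ≫ X.d j
    calc (R.ι j ≫ X.d j ≫ R.π (j + 1)) ≫ R.ι (j + 1)
        = R.ι j ≫ X.d j ≫ R.π (j + 1) ≫ R.ι (j + 1) := by simp only [Category.assoc]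
      _ = (R.ι j ≫ R.π j) ≫ R.ι j ≫ X.d j := by rw [R.comm j hj]; simp only [Category.assoc]
      _ = R.ι j ≫ X.d j := by rw [R.ι_π, Category.id_comp]

lemma fixedHtpyEquiv (h0 : X.X 0 = R.Y 0) (h1 : X.X (n + 1) = R.Y (n + 1))
    (hπ0 : R.π 0 = eqToHom h0) (hπ1 : R.π (n + 1) = eqToHom h1)
    (H : Homotopy' (R.toComplex.comp R.fromComplex) (ChainMap.id X)) :
    FixedHtpyEquiv X R.complex h0 h1 := by
  have hι : ∀ j (h : X.X j = R.Y j), R.π j = eqToHom h → R.ι j = eqToHom h.symm := by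
    intro j h hπ
    have := R.ι_π j
    rwa [hπ, comp_eqToHom_iff, Category.id_comp] at this
  refine ⟨R.toComplex, R.fromComplex, hπ0, hπ1, hι 0 h0 hπ0, hι (n + 1) h1 hπ1, ⟨H⟩,
    ⟨⟨fun _ => 0, ?_, fun j _ => ?_, ?_⟩⟩⟩ <;>
  · simp only [ChainMap.comp, ChainMap.id, toComplex, fromComplex, comp_zero, zero_comp, add_zero]
    exact sub_eq_zero.2 (R.ι_π _)

end NComplex.DegreewiseRetract

end Retract

section Surgery

variable {C : Type u} [Category.{v} C] [Preadditive C] [HasBinaryBiproducts C] {n : ℕ}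

lemma hom_snd_inr_inv {A P Q : C} (U : A ≅ P ⊞ Q) :
    U.hom ≫ biprod.snd ≫ biprod.inr ≫ U.inv = 𝟙 A - U.hom ≫ biprod.fst ≫ biprod.inl ≫ U.inv := by
  calc U.hom ≫ biprod.snd ≫ biprod.inr ≫ U.inv
      = U.hom ≫ (biprod.fst ≫ biprod.inl + biprod.snd ≫ biprod.inr - biprod.fst ≫ biprod.inl) ≫
          U.inv := by simp only [add_sub_cancel_left, Category.assoc]
    _ = _ := by simp [biprod.total, Preadditive.sub_comp, Preadditive.comp_sub]

def surgeryObj (X : NComplex C n) (i : ℕ) (K L : C) (j : ℕ) : C :=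
  if j = i then K else if j = i + 1 then L else X.X j

variable (X : NComplex C n) {i : ℕ} {Z K L : C} (U : X.X i ≅ Z ⊞ K) (V : X.X (i + 1) ≅ Z ⊞ L)

noncomputable def surgeryπ (j : ℕ) : X.X j ⟶ surgeryObj X i K L j :=
  if h : j = i then eqToHom (by rw [h]) ≫ U.hom ≫ biprod.snd ≫ eqToHom (by simp [surgeryObj, h])
  else if h' : j = i + 1 then
    eqToHom (by rw [h']) ≫ V.hom ≫ biprod.snd ≫ eqToHom (by simp [surgeryObj, h'])
  else eqToHom (by simp [surgeryObj, h, h'])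

noncomputable def surgeryι (j : ℕ) : surgeryObj X i K L j ⟶ X.X j :=
  if h : j = i then eqToHom (by simp [surgeryObj, h]) ≫ biprod.inr ≫ U.inv ≫ eqToHom (by rw [h])
  else if h' : j = i + 1 then
    eqToHom (by simp [surgeryObj, h']) ≫ biprod.inr ≫ V.inv ≫ eqToHom (by rw [h'])
  else eqToHom (by simp [surgeryObj, h, h'])

/-- Contracts the summand `Z → Z` split off by `d_i`. -/
noncomputable def surgeryHomotopy (j : ℕ) : X.X (j + 1) ⟶ X.X j :=
  if h : j = i then
    -(eqToHom (by rw [h]) ≫ V.hom ≫ biprod.fst ≫ biprod.inl ≫ U.inv ≫ eqToHom (by rw [h]))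
  else 0

lemma surgeryπ_of_ne {j : ℕ} (h : j ≠ i) (h' : j ≠ i + 1) :
    surgeryπ X U V j = eqToHom (by simp [surgeryObj, h, h']) := by
  simp [surgeryπ, h, h']

lemma surgeryι_π (j : ℕ) : surgeryι X U V j ≫ surgeryπ X U V j = 𝟙 _ := by
  unfold surgeryι surgeryπ
  split_ifs with h h' <;> simp

lemma surgeryπ_ι_self :
    surgeryπ X U V i ≫ surgeryι X U V i = 𝟙 _ - U.hom ≫ biprod.fst ≫ biprod.inl ≫ U.inv := by
  simp [surgeryπ, surgeryι, hom_snd_inr_inv]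

lemma surgeryπ_ι_succ : surgeryπ X U V (i + 1) ≫ surgeryι X U V (i + 1) =
    𝟙 _ - V.hom ≫ biprod.fst ≫ biprod.inl ≫ V.inv := by
  simp [surgeryπ, surgeryι, hom_snd_inr_inv]

lemma surgeryπ_ι_of_ne {j : ℕ} (h : j ≠ i) (h' : j ≠ i + 1) :
    surgeryπ X U V j ≫ surgeryι X U V j = 𝟙 _ := by
  simp [surgeryπ, surgeryι, h, h']

lemma surgeryHomotopy_self :
    surgeryHomotopy X U V i = -(V.hom ≫ biprod.fst ≫ biprod.inl ≫ U.inv) := by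
  simp [surgeryHomotopy]

lemma surgeryHomotopy_of_ne {j : ℕ} (h : j ≠ i) : surgeryHomotopy X U V j = 0 := by
  simp [surgeryHomotopy, h]

variable {X U V}

lemma surgery_comm (hi : i + 1 ≤ n) (hfst : X.d i ≫ V.hom ≫ biprod.fst = U.hom ≫ biprod.fst)
    (hinl : biprod.inl ≫ U.inv ≫ X.d i = biprod.inl ≫ V.inv) (j : ℕ) (hj : j ≤ n) :
    X.d j ≫ surgeryπ X U V (j + 1) ≫ surgeryι X U V (j + 1) =
      surgeryπ X U V j ≫ surgeryι X U V j ≫ X.d j := by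
  rcases eq_or_ne (j + 1) i with rfl | h₁
  · have hU : X.d j ≫ U.hom ≫ biprod.fst = 0 := by
      rw [← hfst, ← Category.assoc, X.dd j (by omega), zero_comp]
    rw [surgeryπ_ι_self, ← Category.assoc (surgeryπ X U V j),
      surgeryπ_ι_of_ne X U V (by omega) (by omega)]
    simp [Preadditive.comp_sub, reassoc_of% hU]
  rcases eq_or_ne j i with rfl | h₂
  · rw [surgeryπ_ι_succ, ← Category.assoc (surgeryπ X U V j), surgeryπ_ι_self]
    simp [Preadditive.comp_sub, Preadditive.sub_comp, reassoc_of% hfst, hinl]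
  rcases eq_or_ne j (i + 1) with rfl | h₃
  · have hV : biprod.inl ≫ V.inv ≫ X.d (i + 1) = 0 := by
      rw [← Category.assoc, ← hinl]
      simp [X.dd i hi]
    rw [surgeryπ_ι_of_ne X U V (by omega) (by omega), ← Category.assoc (surgeryπ X U V (i + 1)),
      surgeryπ_ι_succ]
    simp [Preadditive.sub_comp, hV]
  rw [surgeryπ_ι_of_ne X U V (by omega) (by omega), ← Category.assoc (surgeryπ X U V j),
    surgeryπ_ι_of_ne X U V h₂ h₃]
  simp

variable (hi : i + 1 ≤ n) (hfst : X.d i ≫ V.hom ≫ biprod.fst = U.hom ≫ biprod.fst)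
  (hinl : biprod.inl ≫ U.inv ≫ X.d i = biprod.inl ≫ V.inv)

noncomputable def surgeryRetract : X.DegreewiseRetract where
  Y := surgeryObj X i K L
  π := surgeryπ X U V
  ι := surgeryι X U V
  ι_π := surgeryι_π X U V
  comm := surgery_comm hi hfst hinl

noncomputable def surgeryRetractHomotopy (h1i : 1 ≤ i) :
    Homotopy' ((surgeryRetract hi hfst hinl).toComplex.comp
      (surgeryRetract hi hfst hinl).fromComplex) (ChainMap.id X) where
  s := surgeryHomotopy X U V
  comm0 := by
    change surgeryπ X U V 0 ≫ surgeryι X U V 0 - 𝟙 _ = _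
    rw [surgeryπ_ι_of_ne X U V (by omega) (by omega), surgeryHomotopy_of_ne X U V (by omega)]
    simp
  comm j hj := by
    change surgeryπ X U V (j + 1) ≫ surgeryι X U V (j + 1) - 𝟙 _ = _
    rcases eq_or_ne (j + 1) i with rfl | h₁
    · rw [surgeryπ_ι_self, surgeryHomotopy_of_ne X U V (by omega), surgeryHomotopy_self]
      simp [reassoc_of% hfst]
    rcases eq_or_ne j i with rfl | h₂
    · rw [surgeryπ_ι_succ, surgeryHomotopy_self, surgeryHomotopy_of_ne X U V (by omega)]
      simp [hinl]
    rw [surgeryπ_ι_of_ne X U V h₁ (by omega), surgeryHomotopy_of_ne X U V h₂,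
      surgeryHomotopy_of_ne X U V (by omega)]
    simp
  commTop := by
    change surgeryπ X U V (n + 1) ≫ surgeryι X U V (n + 1) - 𝟙 _ = _
    rw [surgeryπ_ι_of_ne X U V (by omega) (by omega), surgeryHomotopy_of_ne X U V (by omega)]
    simp

end Surgery

section ETransport

variable {C : Type u} [Category.{v} C]

lemma ETransport_refl (E : Cᵒᵖ ⥤ C ⥤ AddCommGrpCat.{v}) {A B : C} (δ : (E.obj (op B)).obj A) :
    ETransport E rfl rfl δ = δ := by
  simp [ETransport]

lemma ETransport_trans (E : Cᵒᵖ ⥤ C ⥤ AddCommGrpCat.{v}) {A A' A'' B B' B'' : C}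
    (hA : A = A') (hB : B = B') (hA' : A' = A'') (hB' : B' = B'') (δ : (E.obj (op B)).obj A) :
    ETransport E hA' hB' (ETransport E hA hB δ) = ETransport E (hA.trans hA') (hB.trans hB') δ := by
  subst hA hB hA' hB'
  rw [ETransport_refl, ETransport_refl]

end ETransport

section Cancellation

variable {C : Type u} [Category.{v} C] [Preadditive C] [HasZeroObject C] [HasBinaryBiproducts C]
  {n : ℕ}

lemma exists_dist_cancel_summand (S : NExang C n) {X : NComplex C n}
    {δ : (S.E.obj (op (X.X (n + 1)))).obj (X.X 0)} (hX : S.Dist X δ) {i : ℕ} (h1i : 1 ≤ i)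
    (hin : i + 1 ≤ n) {Z K L : C} (U : X.X i ≅ Z ⊞ K) (V : X.X (i + 1) ≅ Z ⊞ L) {g : K ⟶ L}
    (hfac : U.inv ≫ X.d i ≫ V.hom = biprod.map (𝟙 Z) g) :
    ∃ (X' : NComplex C n) (e0 : X.X 0 = X'.X 0) (e1 : X.X (n + 1) = X'.X (n + 1)),
      S.Dist X' (ETransport S.E e0 e1 δ) ∧ X'.X i = K ∧ X'.X (i + 1) = L ∧
        ∀ j, j ≠ i → j ≠ i + 1 → X'.X j = X.X j := by
  have hfst : X.d i ≫ V.hom ≫ biprod.fst = U.hom ≫ biprod.fst := by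
    simpa using U.hom ≫= hfac =≫ biprod.fst
  have hinl : biprod.inl ≫ U.inv ≫ X.d i = biprod.inl ≫ V.inv := by
    simpa using biprod.inl ≫= hfac =≫ V.inv
  let R := surgeryRetract hin hfst hinl
  have hobj : ∀ j, j ≠ i → j ≠ i + 1 → R.Y j = X.X j := fun j h h' => by
    simp [R, surgeryRetract, surgeryObj, h, h']
  have h0 := (hobj 0 (by omega) (by omega)).symm
  have h1 := (hobj (n + 1) (by omega) (by omega)).symm
  refine ⟨R.complex, h0, h1, S.closedHtpy _ _ δ h0 h1 hX (R.fixedHtpyEquiv h0 h1 ?_ ?_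
    (surgeryRetractHomotopy hin hfst hinl h1i)), by simp [R, surgeryRetract, surgeryObj,
      NComplex.DegreewiseRetract.complex], ?_, hobj⟩
  · exact surgeryπ_of_ne X U V (by omega) (by omega)
  · exact surgeryπ_of_ne X U V (by omega) (by omega)
  · simp [R, surgeryRetract, surgeryObj, NComplex.DegreewiseRetract.complex]

end Cancellation

section Minimal

variable {C : Type u} [Category.{v} C] [Preadditive C] [HasZeroObject C] [HasFiniteBiproducts C]
  {n : ℕ}

lemma exists_dist_lt_of_not_minimal (S : NExang C n) {X : NComplex C n}
    {δ : (S.E.obj (op (X.X (n + 1)))).obj (X.X 0)} (hX : S.Dist X δ) {m : ℕ → ℕ}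
    (hm : ∀ i, 1 ≤ i → i ≤ n → HasLocalDecomp (m i) (X.X i)) (hmin : ¬MinimalCpx X) :
    ∃ (X' : NComplex C n) (e0 : X.X 0 = X'.X 0) (e1 : X.X (n + 1) = X'.X (n + 1)) (m' : ℕ → ℕ),
      S.Dist X' (ETransport S.E e0 e1 δ) ∧
        (∀ i, 1 ≤ i → i ≤ n → HasLocalDecomp (m' i) (X'.X i)) ∧
          ∑ i ∈ Finset.Icc 1 n, m' i < ∑ i ∈ Finset.Icc 1 n, m i := by
  obtain ⟨i, h1i, hin, hrad⟩ : ∃ i, 1 ≤ i ∧ i + 1 ≤ n ∧ ¬InRad (X.d i) := by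
    simpa [MinimalCpx] using hmin
  obtain ⟨Z, K, L, U, V, g, hfac, hpos, hK, hL⟩ :=
    exists_biprod_map_id_of_not_inRad (hm i h1i (by omega)) (hm (i + 1) (by omega) hin) hrad
  obtain ⟨X', e0, e1, hX', hXK, hXL, hXo⟩ := exists_dist_cancel_summand S hX h1i hin U V hfac
  refine ⟨X', e0, e1, fun j => if j = i ∨ j = i + 1 then m j - 1 else m j, hX', ?_, ?_⟩
  · intro j hj1 hjn
    rcases eq_or_ne j i with rfl | h₁
    · simpa [hXK] using hK
    rcases eq_or_ne j (i + 1) with rfl | h₂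
    · simpa [hXL] using hL
    simpa [h₁, h₂, hXo j h₁ h₂] using hm j hj1 hjn
  · refine Finset.sum_lt_sum (fun j _ => by split_ifs <;> omega)
      ⟨i, Finset.mem_Icc.2 ⟨h1i, by omega⟩, by simp; omega⟩

lemma exists_minimal_of_hasLocalDecomp (S : NExang C n) {X : NComplex C n}
    {δ : (S.E.obj (op (X.X (n + 1)))).obj (X.X 0)} (hX : S.Dist X δ) {m : ℕ → ℕ}
    (hm : ∀ i, 1 ≤ i → i ≤ n → HasLocalDecomp (m i) (X.X i)) :
    ∃ (X' : NComplex C n) (e0 : X.X 0 = X'.X 0) (e1 : X.X (n + 1) = X'.X (n + 1)),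
      S.Dist X' (ETransport S.E e0 e1 δ) ∧ MinimalCpx X' := by
  induction hs : ∑ i ∈ Finset.Icc 1 n, m i using Nat.strong_induction_on
    generalizing X δ m with
  | _ N ih =>
    by_cases hmin : MinimalCpx X
    · exact ⟨X, rfl, rfl, by rwa [ETransport_refl], hmin⟩
    obtain ⟨X', e0, e1, m', hX', hm', hlt⟩ := exists_dist_lt_of_not_minimal S hX hm hmin
    obtain ⟨X'', e0', e1', hX'', hmin''⟩ := ih _ (hs ▸ hlt) hX' hm' rfl
    exact ⟨X'', e0.trans e0', e1.trans e1', by rwa [ETransport_trans] at hX'', hmin''⟩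

end Minimal

theorem stmt4_general {C : Type u} [Category.{v} C] [Preadditive C] [HasZeroObject C]
    [HasFiniteBiproducts C] {n : ℕ} (S : NExang C n)
    (hKS : IsKrullSchmidt C) (A B : C) (δ : (S.E.obj (op B)).obj A) :
    ∃ (X : NComplex C n) (h0 : X.X 0 = A) (h1 : X.X (n + 1) = B),
      S.Dist X (ETransport S.E h0.symm h1.symm δ) ∧ MinimalCpx X := by
  obtain ⟨X, h0, h1, hX⟩ := S.realize A B δ
  choose m Y e hY using fun i => hKS (X.X i)
  obtain ⟨X', e0, e1, hX', hmin⟩ :=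
    exists_minimal_of_hasLocalDecomp S hX fun i _ _ => ⟨Y i, e i, hY i⟩
  refine ⟨X', e0.symm.trans h0, e1.symm.trans h1, ?_, hmin⟩
  rwa [ETransport_trans] at hX'

/-- Lemma 3.3, existence of minimal realizations.  In a Krull–Schmidt
`n`-exangulated category, every `E`-extension `δ ∈ E(B, A)` admits a distinguished
`n`-exangle realization `A → A₁ → ⋯ → A_n → B` in which all the inner differentials
`A₁ → A₂, …, A_{n-1} → A_n` lie in the Jacobson radical of `C`. -/
theorem stmt4 {C : Type u} [Category.{v} C] [Preadditive C] [HasZeroObject C]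
    [HasFiniteBiproducts C] {n : ℕ} (hn : 0 < n) (S : NExang C n)
    (hKS : IsKrullSchmidt C) (A B : C) (δ : (S.E.obj (op B)).obj A) :
    ∃ (X : NComplex C n) (h0 : X.X 0 = A) (h1 : X.X (n + 1) = B),
      S.Dist X (ETransport S.E h0.symm h1.symm δ) ∧ MinimalCpx X :=
  stmt4_general S hKS A B δ

end NExangPaper
end
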